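/- arXiv:2205.00741 — 6 statements merged into one kernel-verified Lean document; each statement's English description precedes it below -/
import Mathlib

section
/- Suppose Z ≤ 1/e and n ≥ max{8e, 16·log(1/Z)}. Let b_1, …, b_T be any real sequence with |b_t| ≤ μ for some 0 < μ ≤ 1, and let x_1, …, x_{T+1} be the deviations produced by DNP-cu. Then for every interval [r, s] ⊆ [1, T] with length τ = s − r + 1, the cumulative reward satisfies Σ_{t=r}^{s} ( g(x_t)·b_t − (1/μ)·|g(x_t) − g(x_{t+1})| ) ≥ max( 0, Σ_{t=r}^{s} b_t − (τ/n)·(U(n) + 2μ) − U(n) − μ ) − U(n) − μ − Z·τ. -/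
/-!
With the potential `Φ(z) = ∫₀ᶻ g`, one round of DNP-cu earns at least `Φ(x_{t+1}) − Φ(x_t) − Z`,
and also at least `b_t − Δ(x − Φ(x)) − (U + 2μ)/n − Z`. Both follow from a single inequality for a
step `x ↦ y`: `(1/μ + |y − x|)·|g(x) − g(y)| ≤ (x/n)·g(x) + Z`, which rests on the slope bound
`g̃(q) − g̃(p) ≤ (q − p)(q g̃(q)/(8n) + Z/7)` (also valid for `g`, since `g = g̃ ∘ min(·, U)` on
`[0, ∞)`). The iterates stay in `[−μ, U + μ]`, where `0 ≤ Φ(z) ≤ max(z, 0)` and `z − Φ(z) ≤ U`, so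
telescoping the two bounds over `[r, s]` gives the two lower bounds whose maximum is the claim.
-/

/-- The Gauss error function `erf(x) = (2/√π) ∫₀ˣ e^{−s²} ds`. -/
noncomputable def erf (x : ℝ) : ℝ :=
  (2 / Real.sqrt Real.pi) * ∫ s in (0:ℝ)..x, Real.exp (-s ^ 2)

/-- The unclipped confidence function `g̃(x) = √(n/8) · Z · erf(x/√(8n)) · e^{x²/(16n)}`. -/
noncomputable def gtilde (n Z x : ℝ) : ℝ :=
  Real.sqrt (n / 8) * Z * erf (x / Real.sqrt (8 * n)) * Real.exp (x ^ 2 / (16 * n))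

/-- The confidence function `g(x)`, the projection of `g̃(x)` onto `[0,1]`. -/
noncomputable def gconf (n Z x : ℝ) : ℝ := min (max (gtilde n Z x) 0) 1

open Real MeasureTheory intervalIntegral

theorem Real.exp_sub_exp_le_exp_mul (a b : ℝ) : exp a - exp b ≤ exp a * (a - b) := by
  have h : exp a * (b - a + 1) ≤ exp b := by
    rw [show b = a + (b - a) by ring, exp_add]
    gcongr
    linarith [add_one_le_exp (b - a)]
  linarith

theorem two_div_sqrt_pi_le : 2 / √π ≤ 8 / 7 := by
  have : (7 / 4 : ℝ) ≤ √π := Real.le_sqrt_of_sq_le (by nlinarith [pi_gt_d2])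
  rw [div_le_div_iff₀ (by linarith) (by norm_num)]
  linarith

section erf

theorem erf_zero : erf 0 = 0 := by simp [erf]

theorem erf_sub_erf (p q : ℝ) : erf q - erf p = 2 / √π * ∫ s in p..q, exp (-s ^ 2) := by
  have hi : ∀ a b : ℝ, IntervalIntegrable (fun s => exp (-s ^ 2)) volume a b :=
    fun a b => (by fun_prop : Continuous fun s : ℝ => exp (-s ^ 2)).intervalIntegrable a b
  rw [erf, erf, ← mul_sub, integral_interval_sub_left (hi 0 q) (hi 0 p)]

theorem erf_monotone : Monotone erf := fun p q hpq => by
  have := integral_nonneg (μ := volume) hpq fun s _ => (exp_pos (-s ^ 2)).le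
  have := erf_sub_erf p q
  have : 0 ≤ 2 / √π := by positivity
  nlinarith

theorem erf_nonneg {x : ℝ} (hx : 0 ≤ x) : 0 ≤ erf x := erf_zero ▸ erf_monotone hx

theorem erf_nonpos {x : ℝ} (hx : x ≤ 0) : erf x ≤ 0 := erf_zero ▸ erf_monotone hx

theorem erf_sub_erf_le {p q : ℝ} (hp : 0 ≤ p) (hpq : p ≤ q) :
    erf q - erf p ≤ 8 / 7 * ((q - p) * exp (-p ^ 2)) := by
  have hint : ∫ s in p..q, exp (-s ^ 2) ≤ (q - p) * exp (-p ^ 2) := by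
    calc ∫ s in p..q, exp (-s ^ 2) ≤ ∫ _ in p..q, exp (-p ^ 2) :=
          integral_mono_on hpq
            ((by fun_prop : Continuous fun s : ℝ => exp (-s ^ 2)).intervalIntegrable _ _)
            intervalIntegrable_const fun s hs => exp_le_exp.2 (by nlinarith [hs.1])
      _ = (q - p) * exp (-p ^ 2) := by simp
  rw [erf_sub_erf]
  have : 0 ≤ (q - p) * exp (-p ^ 2) := by nlinarith [exp_pos (-p ^ 2)]
  calc 2 / √π * ∫ s in p..q, exp (-s ^ 2) ≤ 2 / √π * ((q - p) * exp (-p ^ 2)) := by gcongr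
    _ ≤ _ := mul_le_mul_of_nonneg_right two_div_sqrt_pi_le this

end erf

section gtilde

variable {n Z : ℝ}

theorem gtilde_eq (x : ℝ) :
    gtilde n Z x = √(8 * n) / 8 * Z * erf (x / √(8 * n)) * exp (x ^ 2 / (16 * n)) := by
  rw [gtilde, show n / 8 = 8 * n / 8 ^ 2 by ring, sqrt_div' _ (by norm_num), sqrt_sq (by norm_num)]

theorem gtilde_nonneg (hZ : 0 ≤ Z) {x : ℝ} (hx : 0 ≤ x) : 0 ≤ gtilde n Z x := by
  have := erf_nonneg (div_nonneg hx (sqrt_nonneg (8 * n)))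
  rw [gtilde]; positivity

theorem gtilde_nonpos (hZ : 0 ≤ Z) {x : ℝ} (hx : x ≤ 0) : gtilde n Z x ≤ 0 := by
  have := erf_nonpos (div_nonpos_of_nonpos_of_nonneg hx (sqrt_nonneg (8 * n)))
  rw [gtilde]
  exact mul_nonpos_of_nonpos_of_nonneg (mul_nonpos_of_nonneg_of_nonpos (by positivity) this)
    (exp_pos _).le

theorem gtilde_monotoneOn (hn : 0 ≤ n) (hZ : 0 ≤ Z) :
    MonotoneOn (gtilde n Z) (Set.Ici 0) := by
  intro p hp q _ hpq
  have herf := erf_monotone (div_le_div_of_nonneg_right hpq (sqrt_nonneg (8 * n)))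
  have hexp : exp (p ^ 2 / (16 * n)) ≤ exp (q ^ 2 / (16 * n)) := by gcongr
  have := erf_nonneg (div_nonneg (le_trans hp hpq) (sqrt_nonneg (8 * n)))
  rw [gtilde, gtilde]
  gcongr

/-- The erf factor contributes the slope `Z / (4√π) ≤ Z / 7`, the Gaussian factor
`q g̃(q) / (8n)`. -/
theorem gtilde_sub_le (hn : 0 < n) (hZ : 0 ≤ Z) {p q : ℝ} (hp : 0 ≤ p) (hpq : p ≤ q) :
    gtilde n Z q - gtilde n Z p ≤ (q - p) * (q / (8 * n) * gtilde n Z q + Z / 7) := by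
  set σ := √(8 * n)
  have hσ : 0 < σ := sqrt_pos.2 (by positivity)
  have hσ2 : σ ^ 2 = 8 * n := sq_sqrt (by positivity)
  have hsplit : gtilde n Z q - gtilde n Z p =
      σ / 8 * Z * erf (q / σ) * (exp (q ^ 2 / (16 * n)) - exp (p ^ 2 / (16 * n))) +
      σ / 8 * Z * exp (p ^ 2 / (16 * n)) * (erf (q / σ) - erf (p / σ)) := by
    rw [gtilde_eq, gtilde_eq]; ring
  have hexp := exp_sub_exp_le_exp_mul (q ^ 2 / (16 * n)) (p ^ 2 / (16 * n))
  have herf := erf_sub_erf_le (div_nonneg hp hσ.le) (div_le_div_of_nonneg_right hpq hσ.le)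
  have herfq : 0 ≤ erf (q / σ) := erf_nonneg (div_nonneg (hp.trans hpq) hσ.le)
  have hdecay : exp (p ^ 2 / (16 * n)) * exp (-(p / σ) ^ 2) ≤ 1 := by
    rw [← exp_add, exp_le_one_iff, div_pow, hσ2]
    field_simp
    nlinarith [sq_nonneg p]
  have hq : 0 ≤ gtilde n Z q := gtilde_nonneg hZ (hp.trans hpq)
  calc gtilde n Z q - gtilde n Z p
      ≤ σ / 8 * Z * erf (q / σ) * (exp (q ^ 2 / (16 * n)) *
            (q ^ 2 / (16 * n) - p ^ 2 / (16 * n))) +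
        σ / 8 * Z * exp (p ^ 2 / (16 * n)) * (8 / 7 * ((q / σ - p / σ) * exp (-(p / σ) ^ 2))) := by
        rw [hsplit]; gcongr
    _ = (q - p) * ((q + p) / (16 * n) * gtilde n Z q +
          Z / 7 * (exp (p ^ 2 / (16 * n)) * exp (-(p / σ) ^ 2))) := by
        rw [gtilde_eq]; field_simp; ring
    _ ≤ (q - p) * (q / (8 * n) * gtilde n Z q + Z / 7 * 1) := by
        gcongr ?_ * (?_ * _ + _ * ?_)
        rw [div_le_div_iff₀ (by positivity) (by positivity)]; nlinarith
    _ = _ := by ring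

end gtilde

section gconf

variable {n Z U : ℝ}

theorem gconf_nonneg (x : ℝ) : 0 ≤ gconf n Z x := le_min (le_max_right _ _) zero_le_one

theorem gconf_le_one (x : ℝ) : gconf n Z x ≤ 1 := min_le_right _ _

theorem gconf_of_nonpos (hZ : 0 ≤ Z) {x : ℝ} (hx : x ≤ 0) : gconf n Z x = 0 := by
  rw [gconf, max_eq_right (gtilde_nonpos hZ hx), min_eq_left zero_le_one]

theorem gconf_eq_gtilde_min (hn : 0 ≤ n) (hZ : 0 ≤ Z) (hU : 0 ≤ U) (hgU : gtilde n Z U = 1)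
    {x : ℝ} (hx : 0 ≤ x) : gconf n Z x = gtilde n Z (min x U) := by
  rw [gconf, max_eq_left (gtilde_nonneg hZ hx)]
  rcases le_total x U with h | h
  · rw [min_eq_left h, min_eq_left (hgU ▸ gtilde_monotoneOn hn hZ hx hU h)]
  · rw [min_eq_right h, hgU, min_eq_right (hgU ▸ gtilde_monotoneOn hn hZ hU hx h)]

theorem gconf_of_le (hn : 0 ≤ n) (hZ : 0 ≤ Z) (hU : 0 ≤ U) (hgU : gtilde n Z U = 1)
    {x : ℝ} (hx : U ≤ x) : gconf n Z x = 1 := by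
  rw [gconf_eq_gtilde_min hn hZ hU hgU (hU.trans hx), min_eq_right hx, hgU]

theorem gconf_monotone (hn : 0 ≤ n) (hZ : 0 ≤ Z) (hU : 0 ≤ U) (hgU : gtilde n Z U = 1) :
    Monotone (gconf n Z) := by
  intro p q hpq
  rcases le_total p 0 with hp | hp
  · rw [gconf_of_nonpos hZ hp]; exact gconf_nonneg q
  · rw [gconf_eq_gtilde_min hn hZ hU hgU hp, gconf_eq_gtilde_min hn hZ hU hgU (hp.trans hpq)]
    exact gtilde_monotoneOn hn hZ (le_min hp hU) (le_min (hp.trans hpq) hU)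
      (min_le_min_right U hpq)

theorem gconf_sub_le (hn : 0 < n) (hZ : 0 ≤ Z) (hU : 0 ≤ U) (hgU : gtilde n Z U = 1)
    {p q : ℝ} (hq : 0 ≤ q) (hpq : p ≤ q) :
    gconf n Z q - gconf n Z p ≤ (q - p) * (q / (8 * n) * gconf n Z q + Z / 7) := by
  suffices h : ∀ p, 0 ≤ p → p ≤ q →
      gconf n Z q - gconf n Z p ≤ (q - p) * (q / (8 * n) * gconf n Z q + Z / 7) by
    rcases le_total 0 p with hp | hp
    · exact h p hp hpq
    · have := gconf_nonneg (n := n) (Z := Z) q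
      rw [gconf_of_nonpos hZ hp, ← gconf_of_nonpos (n := n) hZ le_rfl]
      exact (h 0 le_rfl hq).trans (by gcongr)
  intro p hp hpq
  have hlip : min q U - min p U ≤ q - p := by
    simp only [min_def]; split_ifs <;> linarith
  have hgq : gconf n Z q = gtilde n Z (min q U) := gconf_eq_gtilde_min hn.le hZ hU hgU hq
  rw [gconf_eq_gtilde_min hn.le hZ hU hgU hp, hgq]
  calc gtilde n Z (min q U) - gtilde n Z (min p U)
      ≤ (min q U - min p U) * (min q U / (8 * n) * gtilde n Z (min q U) + Z / 7) :=
        gtilde_sub_le hn hZ (le_min hp hU) (min_le_min_right U hpq)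
    _ ≤ (q - p) * (q / (8 * n) * gtilde n Z (min q U) + Z / 7) := by
        rw [← hgq]
        have := gconf_nonneg (n := n) (Z := Z) q
        gcongr
        exact min_le_left q U

theorem gconf_le_of_sq_le (hn : 0 < n) (hZ : 0 ≤ Z) (hU : 0 ≤ U) (hgU : gtilde n Z U = 1)
    {v : ℝ} (hv : 0 ≤ v) (hvn : v ^ 2 ≤ n) : gconf n Z v ≤ Z / 6 * v := by
  have h := gconf_sub_le hn hZ hU hgU hv hv
  rw [gconf_of_nonpos hZ le_rfl, sub_zero, sub_zero] at h
  have hsmall : v * (v / (8 * n)) ≤ 1 / 8 := by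
    rw [← mul_div_assoc, div_le_div_iff₀ (by positivity) (by norm_num)]; nlinarith
  nlinarith [gconf_nonneg (n := n) (Z := Z) v, mul_nonneg hZ hv]

end gconf

theorem Monotone.intervalIntegral_le_mul {f : ℝ → ℝ} (hf : Monotone f) (a b : ℝ) :
    ∫ x in a..b, f x ≤ (b - a) * f b := by
  rcases le_total a b with h | h
  · calc ∫ x in a..b, f x ≤ ∫ _ in a..b, f b :=
          integral_mono_on h hf.intervalIntegrable intervalIntegrable_const fun x hx => hf hx.2
      _ = (b - a) * f b := by simp
  · rw [integral_symm]
    calc -∫ x in b..a, f x ≤ -∫ _ in b..a, f b :=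
          neg_le_neg <| integral_mono_on h intervalIntegrable_const hf.intervalIntegrable
            fun x hx => hf hx.1
      _ = (b - a) * f b := by simp only [intervalIntegral.integral_const, smul_eq_mul]; ring

theorem Monotone.mul_le_intervalIntegral {f : ℝ → ℝ} (hf : Monotone f) (a b : ℝ) :
    (b - a) * f a ≤ ∫ x in a..b, f x := by
  rcases le_total a b with h | h
  · calc (b - a) * f a = ∫ _ in a..b, f a := by simp
      _ ≤ ∫ x in a..b, f x :=
          integral_mono_on h intervalIntegrable_const hf.intervalIntegrable fun x hx => hf hx.1
  · rw [integral_symm]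
    calc (b - a) * f a = -∫ _ in b..a, f a := by
          simp only [intervalIntegral.integral_const, smul_eq_mul]; ring
      _ ≤ -∫ x in b..a, f x :=
          neg_le_neg <| integral_mono_on h hf.intervalIntegrable intervalIntegrable_const
            fun x hx => hf hx.2

noncomputable def gconfPotential (n Z z : ℝ) : ℝ := ∫ u in (0 : ℝ)..z, gconf n Z u

section potential

variable {n Z : ℝ}

theorem gconfPotential_sub (hg : Monotone (gconf n Z)) (a b : ℝ) :
    gconfPotential n Z b - gconfPotential n Z a = ∫ u in a..b, gconf n Z u :=
  integral_interval_sub_left hg.intervalIntegrable hg.intervalIntegrable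

theorem gconfPotential_nonneg (hZ : 0 ≤ Z) (hg : Monotone (gconf n Z)) (z : ℝ) :
    0 ≤ gconfPotential n Z z := by
  simpa [gconfPotential, gconf_of_nonpos hZ le_rfl] using hg.mul_le_intervalIntegral 0 z

theorem gconfPotential_le_max (hg : Monotone (gconf n Z)) (z : ℝ) :
    gconfPotential n Z z ≤ max z 0 := by
  have h := hg.intervalIntegral_le_mul 0 z
  rw [sub_zero, ← gconfPotential] at h
  rcases le_total 0 z with hz | hz
  · rw [max_eq_left hz]; nlinarith [gconf_le_one (n := n) (Z := Z) z]
  · rw [max_eq_right hz]; nlinarith [gconf_nonneg (n := n) (Z := Z) z]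

theorem sub_gconfPotential_le {U : ℝ} (hZ : 0 ≤ Z) (hg : Monotone (gconf n Z))
    (hgU : gconf n Z U = 1) (z : ℝ) : z - gconfPotential n Z z ≤ U := by
  have h := hg.mul_le_intervalIntegral U z
  rw [hgU, mul_one, ← gconfPotential_sub hg] at h
  linarith [gconfPotential_nonneg hZ hg U]

end potential

noncomputable def dnpStep (n U x b : ℝ) : ℝ :=
  if (0 ≤ x ∧ x ≤ U) ∨ (x < 0 ∧ 0 < b) ∨ (U < x ∧ b < 0)
  then (1 - 1 / n) * x + b
  else (1 - 1 / n) * x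

section dnpStep

variable {n Z U μ x y b : ℝ}

theorem abs_dnpStep_sub_le : |dnpStep n U x b - (1 - 1 / n) * x| ≤ |b| := by
  unfold dnpStep; split_ifs <;> simp

theorem dnpStep_bounds (hn : 1 ≤ n) (hU : 0 ≤ U) (hb : |b| ≤ μ)
    (hx : -μ ≤ x ∧ x ≤ U + μ ∧ x ≤ n * μ) :
    -μ ≤ dnpStep n U x b ∧ dnpStep n U x b ≤ U + μ ∧ dnpStep n U x b ≤ n * μ := by
  obtain ⟨hx₁, hx₂, hx₃⟩ := hx
  obtain ⟨hb₁, hb₂⟩ := abs_le.1 hb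
  have hρ : 0 ≤ 1 - 1 / n := by rw [sub_nonneg, div_le_one (by linarith)]; exact hn
  have hnμ : (1 - 1 / n) * (n * μ) = n * μ - μ := by field_simp
  have hρx : (1 - 1 / n) * x ≤ (1 - 1 / n) * (n * μ) := mul_le_mul_of_nonneg_left hx₃ hρ
  rcases le_total 0 x with h0 | h0
  · have h1 : 0 ≤ (1 - 1 / n) * x := mul_nonneg hρ h0
    have h2 : (1 - 1 / n) * x ≤ x := by nlinarith
    unfold dnpStep; split_ifs with h <;> refine ⟨?_, ?_, ?_⟩ <;>
      first | linarith | (rcases h with h | h | h <;> linarith)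
  · have h1 : (1 - 1 / n) * x ≤ 0 := mul_nonpos_of_nonneg_of_nonpos hρ h0
    have h2 : x ≤ (1 - 1 / n) * x := by
      nlinarith [mul_nonneg (one_div_nonneg.2 (by linarith : (0 : ℝ) ≤ n)) (neg_nonneg.2 h0)]
    unfold dnpStep; split_ifs with h <;> refine ⟨?_, ?_, ?_⟩ <;>
      first | linarith | (rcases h with h | h | h <;> linarith)

/-- When the update is frozen, the skipped increment `b` points where `g(x) ∈ {0, 1}`
saturates. -/
theorem gconf_mul_dnpStep_sub_le (hn : 0 ≤ n) (hZ : 0 ≤ Z) (hU : 0 ≤ U)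
    (hgU : gtilde n Z U = 1) :
    gconf n Z x * (dnpStep n U x b - (1 - 1 / n) * x) ≤ gconf n Z x * b ∧
      (1 - gconf n Z x) * b ≤ (1 - gconf n Z x) * (dnpStep n U x b - (1 - 1 / n) * x) := by
  unfold dnpStep
  split_ifs with h
  · simp
  · push Not at h
    rcases lt_or_ge x 0 with hx | hx
    · rw [gconf_of_nonpos hZ hx.le]
      have := h.2.1 hx
      constructor <;> linarith
    · have hUx : U < x := h.1 hx
      rw [gconf_of_le hn hZ hU hgU hUx.le]
      have := h.2.2 hUx
      constructor <;> linarith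

theorem step_bound_of_nonpos (hn : 1 ≤ n) (hZ : 0 ≤ Z) (hU : 0 ≤ U) (hgU : gtilde n Z U = 1)
    (hμ : 0 < μ) (hμ1 : μ ≤ 1) (hx : x ≤ 0) (hy : y ≤ μ) (hyx : |y - x| ≤ 2 * μ) :
    (1 / μ + |y - x|) * |gconf n Z x - gconf n Z y| ≤ Z := by
  rw [gconf_of_nonpos hZ hx, zero_sub, abs_neg, abs_of_nonneg (gconf_nonneg y)]
  rcases le_total y 0 with hy0 | hy0
  · rw [gconf_of_nonpos hZ hy0, mul_zero]; exact hZ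
  have hgy : gconf n Z y ≤ Z / 6 * μ :=
    (gconf_le_of_sq_le (by linarith) hZ hU hgU hy0 (by nlinarith)).trans (by gcongr)
  calc (1 / μ + |y - x|) * gconf n Z y ≤ (1 / μ + 2 * μ) * (Z / 6 * μ) := by
        have := gconf_nonneg (n := n) (Z := Z) y
        gcongr
    _ = Z / 6 * (1 + 2 * μ ^ 2) := by field_simp
    _ ≤ Z := by nlinarith [mul_nonneg hZ (sub_nonneg.2 (show μ ^ 2 ≤ 1 by nlinarith))]

theorem two_mul_slope_le (hn : 21 ≤ n) (hZ : 0 ≤ Z) (hU : 0 ≤ U) (hgU : gtilde n Z U = 1)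
    (hμ : 0 < μ) (hμ1 : μ ≤ 1) (hx : 0 ≤ x) (hxn : x ≤ n * μ) (hxy : x ≤ y) (hyx : y ≤ x + μ) :
    2 * (y / (8 * n) * gconf n Z y + Z / 7) ≤ x / n * gconf n Z x + Z := by
  have hn0 : 0 < n := by linarith
  have hy : 0 ≤ y := hx.trans hxy
  have hgx : 0 ≤ x / n * gconf n Z x := mul_nonneg (div_nonneg hx hn0.le) (gconf_nonneg x)
  rcases le_or_gt (y ^ 2) n with hyn | hyn
  · have h1 : y / (8 * n) * gconf n Z y ≤ Z / 48 := by
      calc y / (8 * n) * gconf n Z y ≤ y / (8 * n) * (Z / 6 * y) := by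
            gcongr; exact gconf_le_of_sq_le hn0 hZ hU hgU hy hyn
        _ = Z / 48 * (y ^ 2 / n) := by field_simp; ring
        _ ≤ Z / 48 := mul_le_of_le_one_right (by positivity) ((div_le_one hn0).2 hyn)
    linarith
  have hy9 : 9 / 2 ≤ y := by nlinarith
  have hxnμ : x / n ≤ μ := by rw [div_le_iff₀ hn0]; linarith
  have hyx' : y / (8 * n) ≤ 9 / 56 * (x / n) := by
    rw [div_le_iff₀ (by positivity)]; field_simp; linarith
  have hdy : (y - x) * (y / (8 * n)) ≤ 11 / 84 := by
    rw [← mul_div_assoc, div_le_div_iff₀ (by positivity) (by norm_num)]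
    nlinarith [mul_le_mul (by linarith : y - x ≤ μ) (by linarith : y ≤ n * μ + μ) hy hμ.le]
  have hgy : gconf n Z y ≤ 84 / 73 * (gconf n Z x + μ * (Z / 7)) := by
    have := gconf_sub_le hn0 hZ hU hgU hy hxy
    have : (y - x) * (y / (8 * n) * gconf n Z y + Z / 7)
        ≤ 11 / 84 * gconf n Z y + μ * (Z / 7) := by
      rw [mul_add, ← mul_assoc]
      gcongr
      · exact gconf_nonneg y
      · linarith
    linarith
  calc 2 * (y / (8 * n) * gconf n Z y + Z / 7)
      ≤ 2 * (9 / 56 * (x / n) * (84 / 73 * (gconf n Z x + μ * (Z / 7))) + Z / 7) := by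
        have := gconf_nonneg (n := n) (Z := Z) y
        gcongr
    _ = 27 / 73 * (x / n * gconf n Z x) + 27 / 73 * (x / n * μ) * (Z / 7) + 2 * (Z / 7) := by
        ring
    _ ≤ x / n * gconf n Z x + Z := by
        have : x / n * μ ≤ 1 := by nlinarith
        nlinarith

theorem step_bound_up (hn : 21 ≤ n) (hZ : 0 ≤ Z) (hU : 0 ≤ U) (hgU : gtilde n Z U = 1)
    (hμ : 0 < μ) (hμ1 : μ ≤ 1) (hx : 0 ≤ x) (hxn : x ≤ n * μ) (hxy : x ≤ y) (hyx : y ≤ x + μ) :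
    (1 / μ + (y - x)) * (gconf n Z y - gconf n Z x) ≤ x / n * gconf n Z x + Z := by
  have hn0 : 0 < n := by linarith
  have hy : 0 ≤ y := hx.trans hxy
  have hfac : (1 / μ + (y - x)) * (y - x) ≤ 2 := by
    have : 1 / μ * (y - x) ≤ 1 := by
      rw [div_mul_eq_mul_div, one_mul, div_le_one hμ]; linarith
    nlinarith
  have := gconf_nonneg (n := n) (Z := Z) y
  calc (1 / μ + (y - x)) * (gconf n Z y - gconf n Z x)
      ≤ (1 / μ + (y - x)) * ((y - x) * (y / (8 * n) * gconf n Z y + Z / 7)) := by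
        gcongr; exact gconf_sub_le hn0 hZ hU hgU hy hxy
    _ = ((1 / μ + (y - x)) * (y - x)) * (y / (8 * n) * gconf n Z y + Z / 7) := by ring
    _ ≤ 2 * (y / (8 * n) * gconf n Z y + Z / 7) := by gcongr
    _ ≤ x / n * gconf n Z x + Z := two_mul_slope_le hn hZ hU hgU hμ hμ1 hx hxn hxy hyx

theorem step_bound_down (hn : 0 < n) (hZ : 0 ≤ Z) (hU : 0 ≤ U) (hgU : gtilde n Z U = 1)
    (hμ : 0 < μ) (hμ1 : μ ≤ 1) (hx : 0 ≤ x) (hyx : y ≤ x) (hxy : x - y ≤ 2 * μ) :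
    (1 / μ + (x - y)) * (gconf n Z x - gconf n Z y) ≤ x / n * gconf n Z x + Z := by
  have hgx := gconf_nonneg (n := n) (Z := Z) x
  have hfac : (1 / μ + (x - y)) * (x - y) ≤ 6 := by
    have : 1 / μ * (x - y) ≤ 2 := by
      rw [div_mul_eq_mul_div, one_mul, div_le_iff₀ hμ]; linarith
    nlinarith
  calc (1 / μ + (x - y)) * (gconf n Z x - gconf n Z y)
      ≤ (1 / μ + (x - y)) * ((x - y) * (x / (8 * n) * gconf n Z x + Z / 7)) := by
        gcongr
        exact gconf_sub_le hn hZ hU hgU hx hyx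
    _ = ((1 / μ + (x - y)) * (x - y)) * (x / (8 * n) * gconf n Z x + Z / 7) := by ring
    _ ≤ 6 * (x / (8 * n) * gconf n Z x + Z / 7) := by gcongr
    _ = 3 / 4 * (x / n * gconf n Z x) + 6 / 7 * Z := by field_simp; ring
    _ ≤ x / n * gconf n Z x + Z := by nlinarith [mul_nonneg (div_nonneg hx hn.le) hgx]

/-- `1/μ · |g x - g y|` is the switching cost of a round and `|y - x| · |g x - g y|` bounds the
error of the left-endpoint rule for `∫ₓʸ g`; the decay `x/n · g(x)` plus `Z` pays for both. -/
theorem step_bound (hn : 21 ≤ n) (hZ : 0 ≤ Z) (hU : 0 ≤ U) (hgU : gtilde n Z U = 1)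
    (hμ : 0 < μ) (hμ1 : μ ≤ 1) (hx₁ : -μ ≤ x) (hx₃ : x ≤ n * μ)
    (hy : |y - (1 - 1 / n) * x| ≤ μ) :
    (1 / μ + |y - x|) * |gconf n Z x - gconf n Z y| ≤ x / n * gconf n Z x + Z := by
  have hn0 : 0 < n := by linarith
  have hxn : |x / n| ≤ μ := by
    rw [abs_le, le_div_iff₀ hn0, div_le_iff₀ hn0]; constructor <;> nlinarith
  have hyx : y - x = (y - (1 - 1 / n) * x) - x / n := by ring
  obtain ⟨hy₁, hy₂⟩ := abs_le.1 hy
  obtain ⟨hxn₁, hxn₂⟩ := abs_le.1 hxn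
  have hg := gconf_monotone hn0.le hZ hU hgU
  rcases le_total x 0 with hx | hx
  · rw [gconf_of_nonpos hZ hx, mul_zero, zero_add, ← gconf_of_nonpos (n := n) hZ hx]
    refine step_bound_of_nonpos (by linarith) hZ hU hgU hμ hμ1 hx ?_ ?_
    · have : x ≤ x / n := by rw [le_div_iff₀ hn0]; nlinarith
      linarith
    · rw [hyx]; exact (abs_sub _ _).trans (by linarith)
  rcases le_total x y with hxy | hxy
  · rw [abs_of_nonneg (sub_nonneg.2 hxy), abs_sub_comm, abs_of_nonneg (sub_nonneg.2 (hg hxy))]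
    exact step_bound_up hn hZ hU hgU hμ hμ1 hx hx₃ hxy (by linarith [div_nonneg hx hn0.le])
  · rw [abs_sub_comm, abs_of_nonneg (sub_nonneg.2 hxy), abs_of_nonneg (sub_nonneg.2 (hg hxy))]
    exact step_bound_down hn0 hZ hU hgU hμ hμ1 hx hxy (by linarith)

theorem dnpStep_reward_bounds (hn : 21 ≤ n) (hZ : 0 ≤ Z) (hU : 0 ≤ U) (hgU : gtilde n Z U = 1)
    (hμ : 0 < μ) (hμ1 : μ ≤ 1) (hx₁ : -μ ≤ x) (hx₂ : x ≤ U + μ) (hx₃ : x ≤ n * μ)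
    (hb : |b| ≤ μ) :
    gconfPotential n Z (dnpStep n U x b) - gconfPotential n Z x - Z ≤
        gconf n Z x * b - 1 / μ * |gconf n Z x - gconf n Z (dnpStep n U x b)| ∧
      b - ((dnpStep n U x b - gconfPotential n Z (dnpStep n U x b)) - (x - gconfPotential n Z x))
          - (U + 2 * μ) / n - Z ≤
        gconf n Z x * b - 1 / μ * |gconf n Z x - gconf n Z (dnpStep n U x b)| := by
  have hn0 : 0 < n := by linarith
  have hg := gconf_monotone hn0.le hZ hU hgU
  have hstar := step_bound hn hZ hU hgU hμ hμ1 hx₁ hx₃ ((abs_dnpStep_sub_le (U := U)).trans hb)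
  obtain ⟨hres₁, hres₂⟩ := gconf_mul_dnpStep_sub_le (x := x) (b := b) hn0.le hZ hU hgU
  set y := dnpStep n U x b
  have hΦ : gconfPotential n Z y - gconfPotential n Z x
      ≤ (y - x) * gconf n Z x + |y - x| * |gconf n Z x - gconf n Z y| := by
    have h := hg.intervalIntegral_le_mul x y
    rw [← gconfPotential_sub hg] at h
    have : (y - x) * (gconf n Z y - gconf n Z x) ≤ |y - x| * |gconf n Z x - gconf n Z y| := by
      rw [abs_sub_comm (gconf n Z x), ← abs_mul]; exact le_abs_self _
    linarith
  have hxn : x / n ≤ (U + 2 * μ) / n := by gcongr; linarith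
  exact ⟨by linear_combination hΦ + hstar + hres₁,
    by linear_combination hΦ + hstar + hres₂ + hxn⟩

theorem dnpStep_iterate_bounds (hn : 1 ≤ n) (hU : 0 ≤ U) (hμ : 0 ≤ μ)
    {T : ℕ} {b x : ℕ → ℝ} (hb : ∀ t, 1 ≤ t → t ≤ T → |b t| ≤ μ) (hx1 : x 1 = 0)
    (hx : ∀ t, 1 ≤ t → t ≤ T → x (t + 1) = dnpStep n U (x t) (b t)) (t : ℕ) (ht : 1 ≤ t)
    (htT : t ≤ T + 1) : -μ ≤ x t ∧ x t ≤ U + μ ∧ x t ≤ n * μ := by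
  induction t, ht using Nat.le_induction with
  | base => rw [hx1]; exact ⟨by linarith, by linarith, by positivity⟩
  | succ t ht ih =>
    rw [hx t ht (by omega)]
    exact dnpStep_bounds hn hU (hb t ht (by omega)) (ih (by omega))

end dnpStep

theorem sub_sub_mul_le_sum_Icc {f a : ℕ → ℝ} {c : ℝ} {r s : ℕ} (hrs : r ≤ s)
    (h : ∀ t ∈ Finset.Icc r s, f (t + 1) - f t - c ≤ a t) :
    f (s + 1) - f r - ((s : ℝ) - r + 1) * c ≤ ∑ t ∈ Finset.Icc r s, a t := by
  have := Finset.sum_le_sum h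
  rwa [Finset.sum_sub_distrib, Finset.sum_Icc_sub hrs, Finset.sum_const, Nat.card_Icc,
    nsmul_eq_mul, Nat.cast_sub (by omega), Nat.cast_add_one, add_sub_right_comm] at this

theorem dnp_cu_reward_lower_bound_general
    (n Z : ℝ) (hn0 : 0 < n) (hZ0 : 0 < Z)
    (hn : n ≥ max (8 * Real.exp 1) (16 * Real.log (1 / Z)))
    (U : ℝ) (hUpos : 0 < U) (hUdef : gtilde n Z U = 1)
    (T : ℕ) (b x : ℕ → ℝ)
    (μ : ℝ) (hμ0 : 0 < μ) (hμ1 : μ ≤ 1)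
    (hb : ∀ t, 1 ≤ t → t ≤ T → |b t| ≤ μ)
    (hx1 : x 1 = 0)
    (hxrec : ∀ t, 1 ≤ t → t ≤ T →
      x (t + 1) = if (0 ≤ x t ∧ x t ≤ U) ∨ (x t < 0 ∧ 0 < b t) ∨ (U < x t ∧ b t < 0)
        then (1 - 1 / n) * x t + b t
        else (1 - 1 / n) * x t)
    (r s : ℕ) (hr : 1 ≤ r) (hrs : r ≤ s) (hsT : s ≤ T) :
    ∑ t ∈ Finset.Icc r s,
        (gconf n Z (x t) * b t - (1 / μ) * |gconf n Z (x t) - gconf n Z (x (t + 1))|)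
      ≥ max 0 (∑ t ∈ Finset.Icc r s, b t
            - ((s : ℝ) - r + 1) / n * (U + 2 * μ) - U - μ)
        - U - μ - Z * ((s : ℝ) - r + 1) := by
  have hn21 : 21 ≤ n := by linarith [(le_max_left _ _).trans hn, exp_one_gt_d9]
  have hg := gconf_monotone hn0.le hZ0.le hUpos.le hUdef
  have hx : ∀ t, 1 ≤ t → t ≤ T → x (t + 1) = dnpStep n U (x t) (b t) := hxrec
  have hinv := dnpStep_iterate_bounds (by linarith) hUpos.le hμ0.le hb hx1 hx
  have hstep (t : ℕ) (ht : t ∈ Finset.Icc r s) := by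
    obtain ⟨hrt, hts⟩ := Finset.mem_Icc.1 ht
    obtain ⟨h₁, h₂, h₃⟩ := hinv t (by omega) (by omega)
    have h := dnpStep_reward_bounds hn21 hZ0.le hUpos.le hUdef hμ0 hμ1 h₁ h₂ h₃
      (hb t (by omega) (by omega))
    rwa [← hx t (by omega) (by omega)] at h
  have hA := sub_sub_mul_le_sum_Icc (f := fun t => gconfPotential n Z (x t)) hrs
    fun t ht => (hstep t ht).1
  have hB := sub_sub_mul_le_sum_Icc (f := fun t => gconfPotential n Z (x t) - x t)
    (a := fun t => gconf n Z (x t) * b t - 1 / μ * |gconf n Z (x t) - gconf n Z (x (t + 1))| - b t)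
    (c := (U + 2 * μ) / n + Z) hrs fun t ht => by linarith [(hstep t ht).2]
  rw [Finset.sum_sub_distrib] at hB
  obtain ⟨hr₁, hr₂, -⟩ := hinv r hr (by omega)
  have h₁ := gconfPotential_nonneg hZ0.le hg (x (s + 1))
  have h₂ := gconfPotential_le_max hg (x r)
  have h₂' : max (x r) 0 ≤ x r + μ := max_le (by linarith) (by linarith)
  have h₂'' : max (x r) 0 ≤ U + μ := max_le hr₂ (by linarith)
  have h₃ := sub_gconfPotential_le hZ0.le hg (gconf_of_le hn0.le hZ0.le hUpos.le hUdef le_rfl)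
    (x (s + 1))
  have hτ : ((s : ℝ) - r + 1) * ((U + 2 * μ) / n + Z)
      = ((s : ℝ) - r + 1) / n * (U + 2 * μ) + Z * ((s : ℝ) - r + 1) := by ring
  rw [ge_iff_le, sub_sub, sub_sub, sub_le_iff_le_add, max_le_iff]
  constructor <;> linarith

/-- **Theorem 1 (first bound), reward lower bound for DNP-cu over any interval.** -/
theorem dnp_cu_reward_lower_bound
    (n Z : ℝ) (hn0 : 0 < n) (hZ0 : 0 < Z) (hZ : Z ≤ 1 / Real.exp 1)
    (hn : n ≥ max (8 * Real.exp 1) (16 * Real.log (1 / Z)))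
    (U : ℝ) (hUpos : 0 < U) (hUdef : gtilde n Z U = 1)
    (hUuniq : ∀ y, 0 < y → gtilde n Z y = 1 → y = U)
    (T : ℕ) (b x : ℕ → ℝ)
    (μ : ℝ) (hμ0 : 0 < μ) (hμ1 : μ ≤ 1)
    (hb : ∀ t, 1 ≤ t → t ≤ T → |b t| ≤ μ)
    (hx1 : x 1 = 0)
    (hxrec : ∀ t, 1 ≤ t → t ≤ T →
      x (t + 1) = if (0 ≤ x t ∧ x t ≤ U) ∨ (x t < 0 ∧ 0 < b t) ∨ (U < x t ∧ b t < 0)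
        then (1 - 1 / n) * x t + b t
        else (1 - 1 / n) * x t)
    (r s : ℕ) (hr : 1 ≤ r) (hrs : r ≤ s) (hsT : s ≤ T) :
    ∑ t ∈ Finset.Icc r s,
        (gconf n Z (x t) * b t - (1 / μ) * |gconf n Z (x t) - gconf n Z (x (t + 1))|)
      ≥ max 0 (∑ t ∈ Finset.Icc r s, b t
            - ((s : ℝ) - r + 1) / n * (U + 2 * μ) - U - μ)
        - U - μ - Z * ((s : ℝ) - r + 1) :=
  dnp_cu_reward_lower_bound_general n Z hn0 hZ0 hn U hUpos hUdef T b x μ hμ0 hμ1 hb hx1 hxrec r s hr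
    hrs hsT
end

section
/- For any 1 ≤ r ≤ s ≤ T, the meta-regret of the combined iterates with respect to A^1 satisfies: Σ_{t=r}^{s} ( f_t(ŵ_t) + λG‖ŵ_t − ŵ_{t+1}‖ ) − Σ_{t=r}^{s} ( f_t(w_t^1) + λG‖w_t^1 − w_{t+1}^1‖ ) ≤ −(1+M)·G·D · Σ_{t=r}^{s} ( c_t·ℓ_t − λ·|c_t − c_{t+1}| ). -/
/-- **Lemma 1 (meta-regret of the combined iterates w.r.t. the first expert).** -/
theorem combiner_meta_regret_first_expert
    (d : ℕ) (W : Set (EuclideanSpace ℝ (Fin d)))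
    (hWne : W.Nonempty) (hWconv : Convex ℝ W) (hWclosed : IsClosed W)
    (G D : ℝ) (hG : 0 < G) (hD : 0 < D)
    (hdiam : ∀ w ∈ W, ∀ w' ∈ W, ‖w - w'‖ ≤ D)
    (T : ℕ) (f : ℕ → EuclideanSpace ℝ (Fin d) → ℝ)
    (hconv : ∀ t, 1 ≤ t → t ≤ T → ConvexOn ℝ Set.univ (f t))
    (hdiff : ∀ t, 1 ≤ t → t ≤ T → Differentiable ℝ (f t))
    (hgrad : ∀ t, 1 ≤ t → t ≤ T → ∀ w ∈ W, ‖gradient (f t) w‖ ≤ G)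
    (hrange : ∀ t, 1 ≤ t → t ≤ T → ∀ w ∈ W, f t w ∈ Set.Icc 0 (G * D))
    (lam : ℝ) (hlam : 0 ≤ lam)
    (w1 w2 : ℕ → EuclideanSpace ℝ (Fin d))
    (hw1W : ∀ t, 1 ≤ t → t ≤ T + 1 → w1 t ∈ W)
    (hw2W : ∀ t, 1 ≤ t → t ≤ T + 1 → w2 t ∈ W)
    (M : ℝ) (hM : 0 ≤ M)
    (hmove1 : ∀ t, 1 ≤ t → t ≤ T → lam * ‖w1 t - w1 (t + 1)‖ ≤ M * D)
    (hmove2 : ∀ t, 1 ≤ t → t ≤ T → lam * ‖w2 t - w2 (t + 1)‖ ≤ M * D)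
    (ℓ : ℕ → ℝ)
    (hℓ : ∀ t, ℓ t = ((f t (w1 t) + lam * G * ‖w1 t - w1 (t + 1)‖)
        - (f t (w2 t) + lam * G * ‖w2 t - w2 (t + 1)‖)) / ((1 + M) * G * D))
    (c : ℕ → ℝ) (hc : ∀ t, c t ∈ Set.Icc (0 : ℝ) 1)
    (what : ℕ → EuclideanSpace ℝ (Fin d))
    (hwhat : ∀ t, what t = (1 - c t) • w1 t + c t • w2 t)
    (r s : ℕ) (hr : 1 ≤ r) (hrs : r ≤ s) (hsT : s ≤ T) :
    ∑ t ∈ Finset.Icc r s, (f t (what t) + lam * G * ‖what t - what (t + 1)‖)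
      - ∑ t ∈ Finset.Icc r s, (f t (w1 t) + lam * G * ‖w1 t - w1 (t + 1)‖)
    ≤ -(1 + M) * G * D
        * ∑ t ∈ Finset.Icc r s, (c t * ℓ t - lam * |c t - c (t + 1)|) := by
  rw [← Finset.sum_sub_distrib, Finset.mul_sum]
  apply Finset.sum_le_sum
  intro t ht
  rw [Finset.mem_Icc] at ht
  have ht1 : 1 ≤ t := le_trans hr ht.1
  have htT : t ≤ T := le_trans ht.2 hsT
  have hc0 := hc t
  have hc1 := hc (t + 1)
  simp only [Set.mem_Icc] at hc0 hc1
  have hconvf : f t ((1 - c t) • w1 t + c t • w2 t)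
      ≤ (1 - c t) * f t (w1 t) + c t * f t (w2 t) := by
    have := (hconv t ht1 htT).2 (Set.mem_univ (w1 t)) (Set.mem_univ (w2 t))
      (by linarith [hc0.2] : (0:ℝ) ≤ 1 - c t) hc0.1 (by ring)
    simpa [smul_eq_mul] using this
  have hdecomp : what t - what (t + 1)
      = (1 - c t) • (w1 t - w1 (t + 1)) + c t • (w2 t - w2 (t + 1))
        + (c (t + 1) - c t) • (w1 (t + 1) - w2 (t + 1)) := by
    rw [hwhat, hwhat]; module
  have hdW : ‖w1 (t + 1) - w2 (t + 1)‖ ≤ D :=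
    hdiam _ (hw1W (t + 1) (by omega) (by omega)) _ (hw2W (t + 1) (by omega) (by omega))
  have hnorm : ‖what t - what (t + 1)‖
      ≤ (1 - c t) * ‖w1 t - w1 (t + 1)‖ + c t * ‖w2 t - w2 (t + 1)‖
        + |c t - c (t + 1)| * D := by
    rw [hdecomp]
    have h1 := norm_add_le ((1 - c t) • (w1 t - w1 (t + 1)) + c t • (w2 t - w2 (t + 1)))
      ((c (t + 1) - c t) • (w1 (t + 1) - w2 (t + 1)))
    have h2 := norm_add_le ((1 - c t) • (w1 t - w1 (t + 1))) (c t • (w2 t - w2 (t + 1)))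
    simp only [norm_smul, Real.norm_eq_abs] at h1 h2
    rw [abs_of_nonneg (by linarith [hc0.2] : (0:ℝ) ≤ 1 - c t), abs_of_nonneg hc0.1] at h2
    have h3 : |c (t + 1) - c t| * ‖w1 (t + 1) - w2 (t + 1)‖ ≤ |c t - c (t + 1)| * D := by
      rw [abs_sub_comm]
      exact mul_le_mul_of_nonneg_left hdW (abs_nonneg _)
    linarith
  have hposML : (0:ℝ) < (1 + M) * G * D := by positivity
  have hℓt : ℓ t * ((1 + M) * G * D)
      = (f t (w1 t) + lam * G * ‖w1 t - w1 (t + 1)‖)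
        - (f t (w2 t) + lam * G * ‖w2 t - w2 (t + 1)‖) := by
    rw [hℓ]; field_simp
  have hlamG : (0:ℝ) ≤ lam * G := by positivity
  have hnorm2 : lam * G * ‖what t - what (t + 1)‖
      ≤ lam * G * ((1 - c t) * ‖w1 t - w1 (t + 1)‖ + c t * ‖w2 t - w2 (t + 1)‖
        + |c t - c (t + 1)| * D) := mul_le_mul_of_nonneg_left hnorm hlamG
  have hkey : c t * (ℓ t * ((1 + M) * G * D))
      = c t * ((f t (w1 t) + lam * G * ‖w1 t - w1 (t + 1)‖)
        - (f t (w2 t) + lam * G * ‖w2 t - w2 (t + 1)‖)) := by rw [hℓt]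
  have hE : (0:ℝ) ≤ |c t - c (t + 1)| := abs_nonneg _
  have h5 : (0:ℝ) ≤ M * (lam * (G * (D * |c t - c (t + 1)|))) := by positivity
  rw [hwhat t] at *
  nlinarith [hconvf, hnorm2, hkey, h5]
end

section
/- For any 1 ≤ r ≤ s ≤ T, the meta-regret of the combined iterates with respect to A^2 satisfies: Σ_{t=r}^{s} ( f_t(ŵ_t) + λG‖ŵ_t − ŵ_{t+1}‖ ) − Σ_{t=r}^{s} ( f_t(w_t^2) + λG‖w_t^2 − w_{t+1}^2‖ ) ≤ −(1+M)·G·D · Σ_{t=r}^{s} ( c_t·ℓ_t − λ·|c_t − c_{t+1}| − ℓ_t ). -/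
/-- **Lemma 1 (meta-regret of the combined iterates w.r.t. the second expert).** -/
theorem combiner_meta_regret_second_expert
    (d : ℕ) (W : Set (EuclideanSpace ℝ (Fin d)))
    (hWne : W.Nonempty) (hWconv : Convex ℝ W) (hWclosed : IsClosed W)
    (G D : ℝ) (hG : 0 < G) (hD : 0 < D)
    (hdiam : ∀ w ∈ W, ∀ w' ∈ W, ‖w - w'‖ ≤ D)
    (T : ℕ) (f : ℕ → EuclideanSpace ℝ (Fin d) → ℝ)
    (hconv : ∀ t, 1 ≤ t → t ≤ T → ConvexOn ℝ Set.univ (f t))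
    (hdiff : ∀ t, 1 ≤ t → t ≤ T → Differentiable ℝ (f t))
    (hgrad : ∀ t, 1 ≤ t → t ≤ T → ∀ w ∈ W, ‖gradient (f t) w‖ ≤ G)
    (hrange : ∀ t, 1 ≤ t → t ≤ T → ∀ w ∈ W, f t w ∈ Set.Icc 0 (G * D))
    (lam : ℝ) (hlam : 0 ≤ lam)
    (w1 w2 : ℕ → EuclideanSpace ℝ (Fin d))
    (hw1W : ∀ t, 1 ≤ t → t ≤ T + 1 → w1 t ∈ W)
    (hw2W : ∀ t, 1 ≤ t → t ≤ T + 1 → w2 t ∈ W)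
    (M : ℝ) (hM : 0 ≤ M)
    (hmove1 : ∀ t, 1 ≤ t → t ≤ T → lam * ‖w1 t - w1 (t + 1)‖ ≤ M * D)
    (hmove2 : ∀ t, 1 ≤ t → t ≤ T → lam * ‖w2 t - w2 (t + 1)‖ ≤ M * D)
    (ℓ : ℕ → ℝ)
    (hℓ : ∀ t, ℓ t = ((f t (w1 t) + lam * G * ‖w1 t - w1 (t + 1)‖)
        - (f t (w2 t) + lam * G * ‖w2 t - w2 (t + 1)‖)) / ((1 + M) * G * D))
    (c : ℕ → ℝ) (hc : ∀ t, c t ∈ Set.Icc (0 : ℝ) 1)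
    (what : ℕ → EuclideanSpace ℝ (Fin d))
    (hwhat : ∀ t, what t = (1 - c t) • w1 t + c t • w2 t)
    (r s : ℕ) (hr : 1 ≤ r) (hrs : r ≤ s) (hsT : s ≤ T) :
    ∑ t ∈ Finset.Icc r s, (f t (what t) + lam * G * ‖what t - what (t + 1)‖)
      - ∑ t ∈ Finset.Icc r s, (f t (w2 t) + lam * G * ‖w2 t - w2 (t + 1)‖)
    ≤ -(1 + M) * G * D
        * ∑ t ∈ Finset.Icc r s, (c t * ℓ t - lam * |c t - c (t + 1)| - ℓ t) := by

  have hK : (0:ℝ) < (1 + M) * G * D := by positivity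
  rw [← Finset.sum_sub_distrib, Finset.mul_sum]
  apply Finset.sum_le_sum
  intro t ht
  obtain ⟨htr, hts⟩ := Finset.mem_Icc.mp ht
  have h1t : 1 ≤ t := le_trans hr htr
  have htT : t ≤ T := le_trans hts hsT
  have hw1t1 : w1 (t+1) ∈ W := hw1W (t+1) (by omega) (by omega)
  have hw2t1 : w2 (t+1) ∈ W := hw2W (t+1) (by omega) (by omega)
  obtain ⟨hc0, hc1⟩ := hc t
  obtain ⟨hc0', hc1'⟩ := hc (t+1)
  have hA : f t (what t) ≤ (1 - c t) * f t (w1 t) + c t * f t (w2 t) := by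
    rw [hwhat]
    exact (hconv t h1t htT).2 (Set.mem_univ _) (Set.mem_univ _) (by linarith) hc0 (by ring)
  have hdec : what t - what (t+1)
      = (1 - c t) • (w1 t - w1 (t+1)) + c t • (w2 t - w2 (t+1))
        + (c (t+1) - c t) • (w1 (t+1) - w2 (t+1)) := by
    rw [hwhat, hwhat]
    module
  have hdW : ‖w1 (t+1) - w2 (t+1)‖ ≤ D := hdiam _ hw1t1 _ hw2t1
  have hB : ‖what t - what (t+1)‖
      ≤ (1 - c t) * ‖w1 t - w1 (t+1)‖ + c t * ‖w2 t - w2 (t+1)‖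
        + |c (t+1) - c t| * D := by
    rw [hdec]
    calc ‖(1 - c t) • (w1 t - w1 (t+1)) + c t • (w2 t - w2 (t+1))
            + (c (t+1) - c t) • (w1 (t+1) - w2 (t+1))‖
        ≤ ‖(1 - c t) • (w1 t - w1 (t+1))‖ + ‖c t • (w2 t - w2 (t+1))‖
            + ‖(c (t+1) - c t) • (w1 (t+1) - w2 (t+1))‖ :=
          norm_add₃_le
      _ ≤ (1 - c t) * ‖w1 t - w1 (t+1)‖ + c t * ‖w2 t - w2 (t+1)‖
            + |c (t+1) - c t| * D := by
          rw [norm_smul, norm_smul, norm_smul, Real.norm_eq_abs, Real.norm_eq_abs,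
            Real.norm_eq_abs, abs_of_nonneg (by linarith : (0:ℝ) ≤ 1 - c t),
            abs_of_nonneg hc0]
          gcongr
  have hRHS : -((1 + M) * G * D) * (c t * ℓ t - lam * |c t - c (t + 1)| - ℓ t)
      = (1 - c t) * ((f t (w1 t) + lam * G * ‖w1 t - w1 (t + 1)‖)
          - (f t (w2 t) + lam * G * ‖w2 t - w2 (t + 1)‖))
        + (1 + M) * G * D * lam * |c t - c (t + 1)| := by
    rw [hℓ t]
    field_simp
    ring
  have habs : |c t - c (t+1)| = |c (t+1) - c t| := abs_sub_comm _ _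
  have hBscaled : lam * G * ‖what t - what (t+1)‖
      ≤ lam * G * ((1 - c t) * ‖w1 t - w1 (t+1)‖ + c t * ‖w2 t - w2 (t+1)‖
        + |c (t+1) - c t| * D) := by
    apply mul_le_mul_of_nonneg_left hB (by positivity)
  have hMterm : 0 ≤ M * G * D * lam * |c (t+1) - c t| := by positivity
  have hgoal : -(1 + M) * G * D * (c t * ℓ t - lam * |c t - c (t + 1)| - ℓ t)
      = -((1 + M) * G * D) * (c t * ℓ t - lam * |c t - c (t + 1)| - ℓ t) := by ring
  rw [hgoal, hRHS, habs]
  nlinarith [hA, hBscaled, hMterm]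
end

section
/- Let w_1, …, w_{T+1} be the iterates of OGD with constant step size η. Then for every interval [r, s] ⊆ [1, T] and every w ∈ W: Σ_{t=r}^{s} ( f_t(w_t) + λG‖w_t − w_{t+1}‖ − f_t(w) ) ≤ D²/(2η) + (1 + 2λ)·η·(s − r + 1)·G²/2. -/
/-!
Each OGD step is the projection of `w_t - η ∇f_t(w_t)` onto `W`, and projecting onto a convex set
does not increase the distance to any point of `W`. Expanding the square and using the first-order
condition `f_t(w_t) - f_t(w) ≤ ⟪∇f_t(w_t), w_t - w⟫` gives the one-round bound
`f_t(w_t) - f_t(w) ≤ (‖w_t - w‖² - ‖w_{t+1} - w‖²)/(2η) + η G²/2`, while the same projection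
property with `w = w_t` bounds the movement `‖w_t - w_{t+1}‖ ≤ η G`, which pays for the switching
cost. Summing over `[r, s]` telescopes the potential, which starts below `D²/(2η)`.
-/

open InnerProductSpace Finset

section FirstOrder

variable {E : Type*} [NormedAddCommGroup E] [NormedSpace ℝ E]

theorem ConvexOn.add_fderiv_sub_le {s : Set E} {f : E → ℝ} {f' : StrongDual ℝ E} {x y : E}
    (hf : ConvexOn ℝ s f) (hx : x ∈ s) (hy : y ∈ s) (hf' : HasFDerivAt f f' x) :
    f x + f' (y - x) ≤ f y := by
  set ℓ : ℝ →ᵃ[ℝ] E := AffineMap.lineMap x y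
  have hderiv : HasDerivAt (f ∘ ℓ) (f' (y - x)) 0 := by
    have hℓ : HasDerivAt ℓ (y - x) 0 := AffineMap.hasDerivAt_lineMap
    exact (by simpa [ℓ] using hf' : HasFDerivAt f f' (ℓ 0)).comp_hasDerivAt 0 hℓ
  have h0 : (0 : ℝ) ∈ ℓ ⁻¹' s := by simpa [ℓ] using hx
  have h1 : (1 : ℝ) ∈ ℓ ⁻¹' s := by simpa [ℓ] using hy
  have := (hf.comp_affineMap ℓ).le_slope_of_hasDerivAt h0 h1 zero_lt_one hderiv
  simp only [slope_def_field, Function.comp_apply, ℓ, AffineMap.lineMap_apply_zero,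
    AffineMap.lineMap_apply_one, sub_zero, div_one] at this
  linarith

end FirstOrder

section Gradient

open scoped Gradient

variable {E : Type*} [NormedAddCommGroup E] [InnerProductSpace ℝ E] [CompleteSpace E]

theorem ConvexOn.add_inner_gradient_sub_le {s : Set E} {f : E → ℝ} {x y : E}
    (hf : ConvexOn ℝ s f) (hx : x ∈ s) (hy : y ∈ s) (hd : DifferentiableAt ℝ f x) :
    f x + ⟪∇ f x, y - x⟫_ℝ ≤ f y := by
  simpa using hf.add_fderiv_sub_le hx hy hd.hasGradientAt.hasFDerivAt

end Gradient

theorem sum_Icc_le_sub_add_mul {a Φ : ℕ → ℝ} {r s : ℕ} {C : ℝ} (hrs : r ≤ s)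
    (h : ∀ t ∈ Icc r s, a t ≤ Φ t - Φ (t + 1) + C) :
    ∑ t ∈ Icc r s, a t ≤ Φ r - Φ (s + 1) + ((s : ℝ) - r + 1) * C := by
  calc ∑ t ∈ Icc r s, a t ≤ ∑ t ∈ Icc r s, (Φ t - Φ (t + 1) + C) := sum_le_sum h
    _ = Φ r - Φ (s + 1) + ((s : ℝ) - r + 1) * C := by
      rw [sum_add_distrib, sum_const, Nat.card_Icc, nsmul_eq_mul, ← neg_sub (Φ (s + 1)),
        ← sum_Icc_sub hrs, ← sum_neg_distrib]
      simp only [neg_sub]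
      push_cast [Nat.cast_sub (by omega : r ≤ s + 1)]
      ring

section NearestPoint

variable {E : Type*} [NormedAddCommGroup E] [InnerProductSpace ℝ E]

def IsNearestPoint (K : Set E) (u p : E) : Prop :=
  p ∈ K ∧ ∀ y ∈ K, ‖u - p‖ ≤ ‖u - y‖

variable {K : Set E} {u p z : E}

theorem IsNearestPoint.inner_sub_nonpos (hK : Convex ℝ K) (hp : IsNearestPoint K u p)
    (hz : z ∈ K) : ⟪u - p, z - p⟫_ℝ ≤ 0 := by
  have : Nonempty K := ⟨⟨p, hp.1⟩⟩
  have hbdd : BddBelow (Set.range fun y : K => ‖u - y‖) :=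
    ⟨0, Set.forall_mem_range.2 fun _ => norm_nonneg _⟩
  refine (norm_eq_iInf_iff_real_inner_le_zero hK hp.1).mp ?_ z hz
  exact le_antisymm (le_ciInf fun y => hp.2 y y.2) (ciInf_le hbdd ⟨p, hp.1⟩)

theorem IsNearestPoint.norm_sub_sq_le (hK : Convex ℝ K) (hp : IsNearestPoint K u p)
    (hz : z ∈ K) : ‖p - z‖ ^ 2 ≤ ‖u - z‖ ^ 2 := by
  have hobtuse := hp.inner_sub_nonpos hK hz
  have hsplit : u - z = (u - p) - (z - p) := by abel
  rw [norm_sub_rev p z, hsplit, norm_sub_sq_real (u - p)]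
  nlinarith [sq_nonneg ‖u - p‖]

theorem IsNearestPoint.norm_sub_le (hK : Convex ℝ K) (hp : IsNearestPoint K u p)
    (hz : z ∈ K) : ‖p - z‖ ≤ ‖u - z‖ :=
  (pow_le_pow_iff_left₀ (norm_nonneg _) (norm_nonneg _) two_ne_zero).mp
    (hp.norm_sub_sq_le hK hz)

variable {x g : E} {η : ℝ}

theorem IsNearestPoint.norm_sub_sq_le_of_step (hK : Convex ℝ K)
    (hp : IsNearestPoint K (x - η • g) p) (hz : z ∈ K) :
    ‖p - z‖ ^ 2 ≤ ‖x - z‖ ^ 2 - 2 * η * ⟪g, x - z⟫_ℝ + η ^ 2 * ‖g‖ ^ 2 := by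
  have hsplit : x - η • g - z = (x - z) - η • g := by abel
  calc ‖p - z‖ ^ 2 ≤ ‖x - η • g - z‖ ^ 2 := hp.norm_sub_sq_le hK hz
    _ = ‖x - z‖ ^ 2 - 2 * η * ⟪g, x - z⟫_ℝ + η ^ 2 * ‖g‖ ^ 2 := by
      rw [hsplit, norm_sub_sq_real, real_inner_smul_right, real_inner_comm, norm_smul,
        mul_pow, Real.norm_eq_abs, sq_abs]
      ring

theorem IsNearestPoint.norm_sub_le_of_step (hK : Convex ℝ K)
    (hp : IsNearestPoint K (x - η • g) p) (hx : x ∈ K) (hη : 0 ≤ η) :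
    ‖x - p‖ ≤ η * ‖g‖ := by
  calc ‖x - p‖ = ‖p - x‖ := norm_sub_rev _ _
    _ ≤ ‖x - η • g - x‖ := hp.norm_sub_le hK hx
    _ = η * ‖g‖ := by rw [sub_sub_cancel_left, norm_neg, norm_smul, Real.norm_of_nonneg hη]

end NearestPoint

section OnlineGradientDescent

open scoped Gradient

variable {E : Type*} [NormedAddCommGroup E] [InnerProductSpace ℝ E] [CompleteSpace E]

theorem ogd_round_le {K : Set E} (hK : Convex ℝ K) {f : E → ℝ} (hf : ConvexOn ℝ Set.univ f)
    {x z p : E} (hx : x ∈ K) (hz : z ∈ K) (hd : DifferentiableAt ℝ f x)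
    {G lam η : ℝ} (hgrad : ‖∇ f x‖ ≤ G) (hlam : 0 ≤ lam) (hη : 0 < η)
    (hp : IsNearestPoint K (x - η • ∇ f x) p) :
    f x + lam * G * ‖x - p‖ - f z
      ≤ ‖x - z‖ ^ 2 / (2 * η) - ‖p - z‖ ^ 2 / (2 * η) + (1 + 2 * lam) * η * G ^ 2 / 2 := by
  set g := ∇ f x
  have hG : 0 ≤ G := (norm_nonneg g).trans hgrad
  have hg2 : ‖g‖ ^ 2 ≤ G ^ 2 := pow_le_pow_left₀ (norm_nonneg g) hgrad 2
  have hlin : f x - f z ≤ ⟪g, x - z⟫_ℝ := by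
    have := hf.add_inner_gradient_sub_le (Set.mem_univ x) (Set.mem_univ z) hd
    rw [← neg_sub x z, inner_neg_right] at this
    linarith
  have hdist : ⟪g, x - z⟫_ℝ ≤ ‖x - z‖ ^ 2 / (2 * η) - ‖p - z‖ ^ 2 / (2 * η) + η * G ^ 2 / 2 := by
    have := hp.norm_sub_sq_le_of_step hK hz
    rw [← sub_div, div_add' _ _ _ (by positivity), le_div_iff₀ (by positivity)]
    nlinarith
  have hswitch : lam * G * ‖x - p‖ ≤ lam * η * G ^ 2 :=
    calc lam * G * ‖x - p‖ ≤ lam * G * (η * G) := by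
          gcongr
          exact (hp.norm_sub_le_of_step hK hx hη.le).trans (by gcongr)
      _ = lam * η * G ^ 2 := by ring
  linarith

end OnlineGradientDescent

theorem ogd_regret_switching_cost_general
    (d : ℕ) (W : Set (EuclideanSpace ℝ (Fin d)))
    (hWconv : Convex ℝ W)
    (G D : ℝ)
    (hdiam : ∀ w ∈ W, ∀ w' ∈ W, ‖w - w'‖ ≤ D)
    (T : ℕ) (f : ℕ → EuclideanSpace ℝ (Fin d) → ℝ)
    (hconv : ∀ t, 1 ≤ t → t ≤ T → ConvexOn ℝ Set.univ (f t))
    (hdiff : ∀ t, 1 ≤ t → t ≤ T → Differentiable ℝ (f t))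
    (hgrad : ∀ t, 1 ≤ t → t ≤ T → ∀ w' ∈ W, ‖gradient (f t) w'‖ ≤ G)
    (lam : ℝ) (hlam : 0 ≤ lam)
    (η : ℝ) (hη : 0 < η)
    (w : ℕ → EuclideanSpace ℝ (Fin d)) (hw1 : w 1 ∈ W)
    (hproj : ∀ t, 1 ≤ t → t ≤ T → w (t + 1) ∈ W ∧
      ∀ y ∈ W, ‖w t - η • gradient (f t) (w t) - w (t + 1)‖
                ≤ ‖w t - η • gradient (f t) (w t) - y‖)
    (r s : ℕ) (hr : 1 ≤ r) (hrs : r ≤ s) (hsT : s ≤ T)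
    (wstar : EuclideanSpace ℝ (Fin d)) (hwstar : wstar ∈ W) :
    ∑ t ∈ Finset.Icc r s,
        (f t (w t) + lam * G * ‖w t - w (t + 1)‖ - f t wstar)
      ≤ D ^ 2 / (2 * η) + (1 + 2 * lam) * η * ((s : ℝ) - r + 1) * G ^ 2 / 2 := by
  have hmem : ∀ t, 1 ≤ t → t ≤ T → w t ∈ W := by
    intro t h1 hT
    rcases h1.eq_or_lt with rfl | h1
    · exact hw1
    · simpa [Nat.sub_add_cancel h1.le] using (hproj (t - 1) (by omega) (by omega)).1
  set Φ : ℕ → ℝ := fun t => ‖w t - wstar‖ ^ 2 / (2 * η)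
  have hround : ∀ t ∈ Finset.Icc r s, f t (w t) + lam * G * ‖w t - w (t + 1)‖ - f t wstar
      ≤ Φ t - Φ (t + 1) + (1 + 2 * lam) * η * G ^ 2 / 2 := by
    intro t ht
    obtain ⟨hrt, hts⟩ := Finset.mem_Icc.mp ht
    have h1 : 1 ≤ t := hr.trans hrt
    have hT : t ≤ T := hts.trans hsT
    have hx := hmem t h1 hT
    exact ogd_round_le hWconv (hconv t h1 hT) hx hwstar (hdiff t h1 hT (w t))
      (hgrad t h1 hT _ hx) hlam hη (hproj t h1 hT)
  have hΦr : Φ r ≤ D ^ 2 / (2 * η) := by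
    have := hdiam _ (hmem r hr (hrs.trans hsT)) _ hwstar
    change ‖w r - wstar‖ ^ 2 / (2 * η) ≤ _
    gcongr
  have hΦs : 0 ≤ Φ (s + 1) := by positivity
  calc _ ≤ Φ r - Φ (s + 1) + ((s : ℝ) - r + 1) * ((1 + 2 * lam) * η * G ^ 2 / 2) :=
        sum_Icc_le_sub_add_mul hrs hround
    _ ≤ D ^ 2 / (2 * η) + (1 + 2 * lam) * η * ((s : ℝ) - r + 1) * G ^ 2 / 2 := by
        linarith

/-- **Theorem (regret with switching cost of OGD over any interval).** -/
theorem ogd_regret_switching_cost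
    (d : ℕ) (W : Set (EuclideanSpace ℝ (Fin d)))
    (hWne : W.Nonempty) (hWconv : Convex ℝ W) (hWclosed : IsClosed W)
    (G D : ℝ) (hG : 0 < G) (hD : 0 < D)
    (hdiam : ∀ w ∈ W, ∀ w' ∈ W, ‖w - w'‖ ≤ D)
    (T : ℕ) (f : ℕ → EuclideanSpace ℝ (Fin d) → ℝ)
    (hconv : ∀ t, 1 ≤ t → t ≤ T → ConvexOn ℝ Set.univ (f t))
    (hdiff : ∀ t, 1 ≤ t → t ≤ T → Differentiable ℝ (f t))
    (hgrad : ∀ t, 1 ≤ t → t ≤ T → ∀ w' ∈ W, ‖gradient (f t) w'‖ ≤ G)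
    (hrange : ∀ t, 1 ≤ t → t ≤ T → ∀ w' ∈ W, f t w' ∈ Set.Icc 0 (G * D))
    (lam : ℝ) (hlam : 0 ≤ lam)
    (η : ℝ) (hη : 0 < η)
    (w : ℕ → EuclideanSpace ℝ (Fin d)) (hw1 : w 1 ∈ W)
    (hproj : ∀ t, 1 ≤ t → t ≤ T → w (t + 1) ∈ W ∧
      ∀ y ∈ W, ‖w t - η • gradient (f t) (w t) - w (t + 1)‖
                ≤ ‖w t - η • gradient (f t) (w t) - y‖)
    (r s : ℕ) (hr : 1 ≤ r) (hrs : r ≤ s) (hsT : s ≤ T)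
    (wstar : EuclideanSpace ℝ (Fin d)) (hwstar : wstar ∈ W) :
    ∑ t ∈ Finset.Icc r s,
        (f t (w t) + lam * G * ‖w t - w (t + 1)‖ - f t wstar)
      ≤ D ^ 2 / (2 * η) + (1 + 2 * lam) * η * ((s : ℝ) - r + 1) * G ^ 2 / 2 :=
  ogd_regret_switching_cost_general d W hWconv G D hdiam T f hconv hdiff hgrad lam hlam η hη w hw1
    hproj r s hr hrs hsT wstar hwstar
end

section
/- Let w_1, …, w_{T+1} be the iterates of OGD with constant step size η. Then for every interval [r, s] ⊆ [1, T] and every comparator sequence u_r, …, u_{s+1} ∈ W: Σ_{t=r}^{s} ( f_t(w_t) + λG‖w_t − w_{t+1}‖ − f_t(u_t) ) ≤ D²/(2η) + (D/η)·Σ_{t=r}^{s} ‖u_t − u_{t+1}‖ + (1 + 2λ)·η·(s − r + 1)·G²/2. -/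
/-!
Projecting onto `W` moves `w t - η • ∇f_t (w t)` closer to every point of `W`, so one step of
OGD gives `‖w (t+1) - u‖² ≤ ‖w t - u‖² - 2η ⟪∇f_t (w t), w t - u⟫ + η² G²` for all `u ∈ W`.
With `u = w t` this bounds the switching cost `‖w t - w (t+1)‖ ≤ η G`; with `u = u t` and the
first-order condition of convexity it bounds the regret of round `t` by a drop of the potential
`‖w t - u t‖²`. Moving the comparator from `u t` to `u (t+1)` in the potential costs at most
`2 D ‖u t - u (t+1)‖`, after which the potentials telescope and the first one is at most `D²`.
-/

open scoped RealInnerProductSpace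
open Finset

theorem sq_norm_sub_sq_norm_le {E : Type*} [SeminormedAddCommGroup E] {a b : E} {D : ℝ}
    (ha : ‖a‖ ≤ D) (hb : ‖b‖ ≤ D) :
    ‖a‖ ^ 2 - ‖b‖ ^ 2 ≤ 2 * D * ‖a - b‖ := by
  nlinarith [abs_norm_sub_norm_le a b, le_abs_self (‖a‖ - ‖b‖), norm_nonneg a, norm_nonneg b,
    norm_nonneg (a - b)]

section InnerProductSpace

variable {E : Type*} [NormedAddCommGroup E] [InnerProductSpace ℝ E]

theorem ConvexOn.add_inner_le_of_hasGradientAt [CompleteSpace E] {S : Set E} {f : E → ℝ}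
    {g x : E} (hf : ConvexOn ℝ S f) (hx : x ∈ S) (hg : HasGradientAt f g x) {y : E}
    (hy : y ∈ S) : f x + ⟪g, y - x⟫ ≤ f y := by
  have hφ : HasDerivAt (f ∘ (AffineMap.lineMap x y : ℝ → E)) ⟪g, y - x⟫ 0 := by
    have hfx : HasFDerivAt f (InnerProductSpace.toDual ℝ E g)
        (AffineMap.lineMap x y (0 : ℝ)) := by
      simpa using hg.hasFDerivAt
    simpa using hfx.comp_hasDerivAt (0 : ℝ) AffineMap.hasDerivAt_lineMap
  have h := (hf.comp_affineMap (AffineMap.lineMap (k := ℝ) x y)).le_slope_of_hasDerivAt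
    (x := 0) (y := 1) (by simpa using hx) (by simpa using hy) one_pos hφ
  rw [slope_def_field] at h
  simp only [Function.comp_apply, AffineMap.lineMap_apply_one, AffineMap.lineMap_apply_zero,
    sub_zero, div_one] at h
  linarith

theorem real_inner_le_zero_of_forall_norm_sub_le {K : Set E} (hK : Convex ℝ K) {z p : E}
    (hp : p ∈ K) (hmin : ∀ y ∈ K, ‖z - p‖ ≤ ‖z - y‖) : ∀ y ∈ K, ⟪z - p, y - p⟫ ≤ 0 := by
  have : Nonempty K := ⟨⟨p, hp⟩⟩
  rw [← norm_eq_iInf_iff_real_inner_le_zero hK hp]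
  refine le_antisymm (le_ciInf fun y => hmin y y.2) (ciInf_le ⟨0, ?_⟩ (⟨p, hp⟩ : K))
  rintro _ ⟨y, rfl⟩
  exact norm_nonneg _

theorem norm_sub_le_of_forall_norm_sub_le {K : Set E} (hK : Convex ℝ K) {z p : E}
    (hp : p ∈ K) (hmin : ∀ y ∈ K, ‖z - p‖ ≤ ‖z - y‖) {u : E} (hu : u ∈ K) :
    ‖p - u‖ ≤ ‖z - u‖ := by
  have hVI := real_inner_le_zero_of_forall_norm_sub_le hK hp hmin u hu
  have hsplit : ‖z - u‖ ^ 2 = ‖z - p‖ ^ 2 - 2 * ⟪z - p, u - p⟫ + ‖p - u‖ ^ 2 := by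
    rw [show z - u = (z - p) - (u - p) by abel, norm_sub_sq_real, ← norm_neg (u - p), neg_sub]
  nlinarith [norm_nonneg (p - u), norm_nonneg (z - u), sq_nonneg ‖z - p‖]

theorem ogd_step_regret_le [CompleteSpace E] {K : Set E} (hK : Convex ℝ K) {D : ℝ}
    (hdiam : ∀ a ∈ K, ∀ b ∈ K, ‖a - b‖ ≤ D) {f : E → ℝ} (hf : ConvexOn ℝ K f) {g x p u v : E}
    (hg : HasGradientAt f g x) {G η lam : ℝ} (hgG : ‖g‖ ≤ G) (hlam : 0 ≤ lam) (hη : 0 < η)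
    (hx : x ∈ K) (hp : p ∈ K) (hproj : ∀ y ∈ K, ‖x - η • g - p‖ ≤ ‖x - η • g - y‖)
    (hu : u ∈ K) (hv : v ∈ K) :
    f x + lam * G * ‖x - p‖ - f u
      ≤ (‖x - u‖ ^ 2 - ‖p - v‖ ^ 2) / (2 * η) + D / η * ‖u - v‖
        + (1 + 2 * lam) * η * G ^ 2 / 2 := by
  have hG : 0 ≤ G := (norm_nonneg g).trans hgG
  have hswitch : ‖x - p‖ ≤ η * G := by
    have := norm_sub_le_of_forall_norm_sub_le hK hp hproj hx
    rw [sub_sub_cancel_left, norm_neg, norm_smul, Real.norm_of_nonneg hη.le] at this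
    rw [norm_sub_rev]
    exact this.trans (by gcongr)
  have hdesc : ‖p - u‖ ^ 2 ≤ ‖x - u‖ ^ 2 - 2 * η * ⟪g, x - u⟫ + η ^ 2 * ‖g‖ ^ 2 := by
    have := pow_le_pow_left₀ (norm_nonneg _) (norm_sub_le_of_forall_norm_sub_le hK hp hproj hu) 2
    rw [sub_right_comm, norm_sub_sq_real (x - u), real_inner_smul_right, norm_smul,
      real_inner_comm, Real.norm_of_nonneg hη.le] at this
    linarith
  have hgi : f x - f u ≤ ⟪g, x - u⟫ := by
    have := hf.add_inner_le_of_hasGradientAt hx hg hu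
    rw [← neg_sub x u, inner_neg_right] at this
    linarith
  have hcorr := sq_norm_sub_sq_norm_le (hdiam p hp v hv) (hdiam p hp u hu)
  rw [sub_sub_sub_cancel_left] at hcorr
  have hcost : 2 * η * (lam * G * ‖x - p‖) ≤ 2 * η * (lam * G * (η * G)) := by gcongr
  have hlin : 2 * η * (f x - f u) ≤ 2 * η * ⟪g, x - u⟫ := by gcongr
  have hgG2 : η ^ 2 * ‖g‖ ^ 2 ≤ η ^ 2 * G ^ 2 := by gcongr
  have hdrift : D / η * ‖u - v‖ * (2 * η) = 2 * D * ‖u - v‖ := by field_simp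
  rw [div_add' _ _ _ (by positivity), div_add' _ _ _ (by positivity), le_div_iff₀ (by positivity)]
  linarith

end InnerProductSpace

theorem sum_Icc_le_of_le_telescoping {x a b : ℕ → ℝ} {r s : ℕ} (hrs : r ≤ s) {κ c : ℝ}
    (h : ∀ t ∈ Icc r s, x t ≤ (a t - a (t + 1)) / κ + b t + c) :
    ∑ t ∈ Icc r s, x t ≤ (a r - a (s + 1)) / κ + ∑ t ∈ Icc r s, b t + ((s : ℝ) - r + 1) * c := by
  have htel : ∑ t ∈ Icc r s, (a t - a (t + 1)) = a r - a (s + 1) := by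
    have := sum_Icc_sub hrs a
    rw [sum_sub_distrib] at this ⊢
    linarith
  have hcard : ((#(Icc r s) : ℕ) : ℝ) = (s : ℝ) - r + 1 := by
    rw [Nat.card_Icc, Nat.cast_sub (by omega)]
    push_cast
    ring
  calc ∑ t ∈ Icc r s, x t ≤ ∑ t ∈ Icc r s, ((a t - a (t + 1)) / κ + b t + c) := sum_le_sum h
    _ = _ := by
      rw [sum_add_distrib, sum_add_distrib, ← sum_div, htel, sum_const, nsmul_eq_mul, hcard]

theorem ogd_dynamic_regret_switching_cost_general
    (d : ℕ) (W : Set (EuclideanSpace ℝ (Fin d)))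
    (hWconv : Convex ℝ W)
    (G D : ℝ)
    (hdiam : ∀ w ∈ W, ∀ w' ∈ W, ‖w - w'‖ ≤ D)
    (T : ℕ) (f : ℕ → EuclideanSpace ℝ (Fin d) → ℝ)
    (hconv : ∀ t, 1 ≤ t → t ≤ T → ConvexOn ℝ Set.univ (f t))
    (hdiff : ∀ t, 1 ≤ t → t ≤ T → Differentiable ℝ (f t))
    (hgrad : ∀ t, 1 ≤ t → t ≤ T → ∀ w' ∈ W, ‖gradient (f t) w'‖ ≤ G)
    (lam : ℝ) (hlam : 0 ≤ lam)
    (η : ℝ) (hη : 0 < η)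
    (w : ℕ → EuclideanSpace ℝ (Fin d)) (hw1 : w 1 ∈ W)
    (hproj : ∀ t, 1 ≤ t → t ≤ T → w (t + 1) ∈ W ∧
      ∀ y ∈ W, ‖w t - η • gradient (f t) (w t) - w (t + 1)‖
                ≤ ‖w t - η • gradient (f t) (w t) - y‖)
    (r s : ℕ) (hr : 1 ≤ r) (hrs : r ≤ s) (hsT : s ≤ T)
    (u : ℕ → EuclideanSpace ℝ (Fin d)) (hu : ∀ t, r ≤ t → t ≤ s + 1 → u t ∈ W) :
    ∑ t ∈ Finset.Icc r s,
        (f t (w t) + lam * G * ‖w t - w (t + 1)‖ - f t (u t))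
      ≤ D ^ 2 / (2 * η) + (D / η) * ∑ t ∈ Finset.Icc r s, ‖u t - u (t + 1)‖
        + (1 + 2 * lam) * η * ((s : ℝ) - r + 1) * G ^ 2 / 2 := by
  have hw : ∀ t, 1 ≤ t → t ≤ T + 1 → w t ∈ W := by
    intro t ht
    induction t, ht using Nat.le_induction with
    | base => exact fun _ => hw1
    | succ t ht _ => exact fun htT => (hproj t ht (by omega)).1
  have hround : ∀ t ∈ Icc r s, f t (w t) + lam * G * ‖w t - w (t + 1)‖ - f t (u t)
      ≤ (‖w t - u t‖ ^ 2 - ‖w (t + 1) - u (t + 1)‖ ^ 2) / (2 * η)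
        + D / η * ‖u t - u (t + 1)‖ + (1 + 2 * lam) * η * G ^ 2 / 2 := by
    intro t ht
    obtain ⟨hrt, hts⟩ := mem_Icc.mp ht
    have h1t : 1 ≤ t := hr.trans hrt
    have htT : t ≤ T := hts.trans hsT
    exact ogd_step_regret_le hWconv hdiam ((hconv t h1t htT).subset (Set.subset_univ W) hWconv)
      (hdiff t h1t htT (w t)).hasGradientAt (hgrad t h1t htT (w t) (hw t h1t (by omega)))
      hlam hη (hw t h1t (by omega)) (hproj t h1t htT).1 (hproj t h1t htT).2
      (hu t hrt (by omega)) (hu (t + 1) (by omega) (by omega))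
  have hpotential : (‖w r - u r‖ ^ 2 - ‖w (s + 1) - u (s + 1)‖ ^ 2) / (2 * η)
      ≤ D ^ 2 / (2 * η) := by
    have := hdiam _ (hw r hr (by omega)) _ (hu r le_rfl (by omega))
    gcongr
    nlinarith [norm_nonneg (w r - u r), sq_nonneg ‖w (s + 1) - u (s + 1)‖]
  have hsum := sum_Icc_le_of_le_telescoping hrs hround
  rw [← mul_sum] at hsum
  linarith

/-- **Theorem (dynamic regret with switching cost of OGD over any interval).** -/
theorem ogd_dynamic_regret_switching_cost
    (d : ℕ) (W : Set (EuclideanSpace ℝ (Fin d)))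
    (hWne : W.Nonempty) (hWconv : Convex ℝ W) (hWclosed : IsClosed W)
    (G D : ℝ) (hG : 0 < G) (hD : 0 < D)
    (hdiam : ∀ w ∈ W, ∀ w' ∈ W, ‖w - w'‖ ≤ D)
    (T : ℕ) (f : ℕ → EuclideanSpace ℝ (Fin d) → ℝ)
    (hconv : ∀ t, 1 ≤ t → t ≤ T → ConvexOn ℝ Set.univ (f t))
    (hdiff : ∀ t, 1 ≤ t → t ≤ T → Differentiable ℝ (f t))
    (hgrad : ∀ t, 1 ≤ t → t ≤ T → ∀ w' ∈ W, ‖gradient (f t) w'‖ ≤ G)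
    (hrange : ∀ t, 1 ≤ t → t ≤ T → ∀ w' ∈ W, f t w' ∈ Set.Icc 0 (G * D))
    (lam : ℝ) (hlam : 0 ≤ lam)
    (η : ℝ) (hη : 0 < η)
    (w : ℕ → EuclideanSpace ℝ (Fin d)) (hw1 : w 1 ∈ W)
    (hproj : ∀ t, 1 ≤ t → t ≤ T → w (t + 1) ∈ W ∧
      ∀ y ∈ W, ‖w t - η • gradient (f t) (w t) - w (t + 1)‖
                ≤ ‖w t - η • gradient (f t) (w t) - y‖)
    (r s : ℕ) (hr : 1 ≤ r) (hrs : r ≤ s) (hsT : s ≤ T)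
    (u : ℕ → EuclideanSpace ℝ (Fin d)) (hu : ∀ t, r ≤ t → t ≤ s + 1 → u t ∈ W) :
    ∑ t ∈ Finset.Icc r s,
        (f t (w t) + lam * G * ‖w t - w (t + 1)‖ - f t (u t))
      ≤ D ^ 2 / (2 * η) + (D / η) * ∑ t ∈ Finset.Icc r s, ‖u t - u (t + 1)‖
        + (1 + 2 * lam) * η * ((s : ℝ) - r + 1) * G ^ 2 / 2 :=
  ogd_dynamic_regret_switching_cost_general d W hWconv G D hdiam T f hconv hdiff hgrad lam hlam η hη
    w hw1 hproj r s hr hrs hsT u hu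
end

section
/- Suppose Z ≤ 1/e, n ≥ max{8e, 16·log(1/Z)}, and let b_1, …, b_T be any real sequence with |b_t| ≤ μ for some 0 < μ ≤ 1. Then the deviations of DNP-cu satisfy −μ ≤ x_t ≤ U(n) + μ for all t ≥ 1. -/
/-- **Range of the deviations of DNP-cu: −μ ≤ x_t ≤ U(n) + μ.** -/
theorem dnp_cu_deviation_range
    (n Z : ℝ) (hn0 : 0 < n) (hZ0 : 0 < Z) (hZ : Z ≤ 1 / Real.exp 1)
    (hn : n ≥ max (8 * Real.exp 1) (16 * Real.log (1 / Z)))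
    (U : ℝ) (hUpos : 0 < U) (hUdef : gtilde n Z U = 1)
    (hUuniq : ∀ y, 0 < y → gtilde n Z y = 1 → y = U)
    (T : ℕ) (b x : ℕ → ℝ)
    (μ : ℝ) (hμ0 : 0 < μ) (hμ1 : μ ≤ 1)
    (hb : ∀ t, 1 ≤ t → t ≤ T → |b t| ≤ μ)
    (hx1 : x 1 = 0)
    (hxrec : ∀ t, 1 ≤ t → t ≤ T →
      x (t + 1) = if (0 ≤ x t ∧ x t ≤ U) ∨ (x t < 0 ∧ 0 < b t) ∨ (U < x t ∧ b t < 0)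
        then (1 - 1 / n) * x t + b t
        else (1 - 1 / n) * x t) :
    ∀ t : ℕ, 1 ≤ t → t ≤ T + 1 → -μ ≤ x t ∧ x t ≤ U + μ := by

  have h8 : (8:ℝ) * Real.exp 1 ≤ n := le_trans (le_max_left _ _) hn
  have he : (1:ℝ) ≤ Real.exp 1 := Real.one_le_exp (by norm_num)
  have hn1 : (1:ℝ) ≤ n := by nlinarith
  have hρ0 : 0 ≤ 1 - 1/n := by
    have : 1/n ≤ 1 := by rw [div_le_one hn0]; exact hn1
    linarith
  have hρ1 : 1 - 1/n ≤ 1 := by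
    have : 0 < 1/n := by positivity
    linarith
  intro t
  induction t with
  | zero => intro h; omega
  | succ k ih =>
    intro _ hk
    rcases Nat.eq_zero_or_pos k with hk0 | hk1
    · subst hk0; rw [show (0+1 : ℕ) = 1 from rfl, hx1]
      constructor <;> linarith
    · have hkT : k ≤ T := by omega
      obtain ⟨hlo, hhi⟩ := ih hk1 (by omega)
      have hbk := hb k hk1 hkT
      rw [abs_le] at hbk
      rw [hxrec k hk1 hkT]
      split_ifs with h
      · rcases h with ⟨h1, h2⟩ | ⟨h1, h2⟩ | ⟨h1, h2⟩
        · constructor <;> nlinarith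
        · constructor <;> nlinarith
        · constructor <;> nlinarith
      · constructor <;> nlinarith
end
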